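/- Parity of R-matrix entries: for nonnegative half-integers a, b let i(a) = 1 if 2a is odd and i(a) = 0 otherwise. For half-integers u, v with |u| ≤ a, |v| ≤ b, u−a, v−b ∈ ℤ and an integer n ≥ 0 with |u+n| ≤ a, |v−n| ≤ b, the R-matrix entry [n]!(q−q^{−1})^n · [a−u choose n] · [a+u+n choose n] · q^{2uv−n(u−v)−n(n+1)/2} lies in q^{ε/2} · ℤ[q, q^{−1}], where ε ∈ {0,1} satisfies ε ≡ n·(i(a)+i(b)) + i(a)·i(b) (mod 2). In other words, the parity of the powers of q^{1/2} occurring in this entry depends only on n, i(a) and i(b). -/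

import Mathlib

noncomputable section
open scoped Classical

namespace QSpin

/-- The ambient field: rational functions over `ℂ` (which contains `ℚ(i)`),
in a variable `X` which represents the formal fourth root `q^(1/4)`. -/
abbrev K : Type := RatFunc ℂ

/-- `X` represents `q^(1/4)`. -/
def X : K := RatFunc.X

/-- The quantum variable `q = X^4`. -/
def q : K := X ^ 4

/-- `i = √-1`, as a constant of `K`. -/
def ii : K := RatFunc.C Complex.I

/-- `q` raised to a rational power `r` (meaningful whenever `4 * r ∈ ℤ`). -/
def qpow (r : ℚ) : K := X ^ (4 * r).num

/-- Half of an integer, as a rational number: a half-integer is encoded by its double. -/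
def hf (n : ℤ) : ℚ := (n : ℚ) / 2

/-- Integer powers of `i`. -/
def ipow (n : ℤ) : K := ii ^ n

/-- Integer powers of `-1`. -/
def m1pow (n : ℤ) : K := (-1 : K) ^ n

/-- The quantum integer `[n] = (q^n - q^(-n))/(q - q⁻¹)`. -/
def qint (n : ℤ) : K := (q ^ n - q ^ (-n)) / (q - q⁻¹)

/-- The quantum factorial `[n]!`. -/
def qfact (n : ℕ) : K := ∏ j ∈ Finset.range n, qint (j + 1)

/-- The quantum factorial of an integer (zero for negative arguments). -/
def qfactz (n : ℤ) : K := if 0 ≤ n then qfact n.toNat else 0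

/-- The quantum binomial `[n choose k]`, vanishing unless `0 ≤ k ≤ n`. -/
def qbin (n k : ℤ) : K :=
  if 0 ≤ k ∧ k ≤ n then qfactz n / (qfactz k * qfactz (n - k)) else 0

/-- Admissibility of a triple of half-integers (encoded by their doubles):
all nonnegative, total sum an integer (i.e. the sum of the doubles is even), and
the triangular inequalities hold. -/
def Adm (a b c : ℤ) : Prop :=
  0 ≤ a ∧ 0 ≤ b ∧ 0 ≤ c ∧ 2 ∣ (a + b + c) ∧ c ≤ a + b ∧ a ≤ b + c ∧ b ≤ c + a

/-- The quantum Clebsch-Gordan coefficient `C^{a,b,c}_{u,v,t}`; all six half-integer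
parameters are encoded by their doubles. -/
def CG (a b c u v t : ℤ) : K :=
  if u + v = t then
    ipow ((c - a - b) / 2) * m1pow ((b - v) / 2 - (c - t) / 2) *
      qpow ((hf b - hf v) * (hf b + hf v + 1) / 2 - (hf a - hf u) * (hf a + hf u + 1) / 2) *
      (qfactz ((a + b - c) / 2) * qfactz ((b + c - a) / 2) * qfactz ((c + a - b) / 2) /
        qfactz c) *
      ∑ z ∈ Finset.range (((c - t) / 2).toNat + 1),
        m1pow z *
          qpow (((z : ℚ) - (((c - t) / 2 - (z : ℤ) : ℤ) : ℚ)) * (hf c + hf t + 1) / 2) *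
          qbin ((a + u) / 2 + z) ((a + c - b) / 2) *
          qbin ((b + v) / 2 + ((c - t) / 2 - (z : ℤ))) ((b + c - a) / 2) *
          qbin ((c - t) / 2) z
  else 0

/-- The coefficient `W^{a,b,c}_{u,v,t} = C^{a,b,c}_{u,v,-t} · i^{-2t} q^{-t} · [2c]!`. -/
def W (a b c u v t : ℤ) : K := CG a b c u v (-t) * ipow (-t) * qpow (-(hf t)) * qfactz c

/-- The coefficient `P^{a,b,c}_{u,v,t} = C^{a,c,b}_{-u,t,v} · i^{2u} q^{u} / [2a]!`. -/
def Pc (a b c u v t : ℤ) : K := CG a c b (-u) t v * ipow u * qpow (hf u) / qfactz a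

/-- The coefficient `M^{a,b,c}_{u,v,t} = P^{a,b,c}_{u,v,-t} · i^{-2t} q^{-t} / [2c]!`. -/
def M (a b c u v t : ℤ) : K := Pc a b c u v (-t) * ipow (-t) * qpow (-(hf t)) / qfactz c


/-- `i(a) = 1` if `2a` is odd and `0` otherwise; the half-integer `a` is encoded by its
double, so `2a` odd means the double is odd. -/
def halfparity (a : ℤ) : ℤ := if Odd a then 1 else 0

/-!
In the doubled encoding the power of `q` is `q^{t/2} = X^{2t}` with
`t = uv − n(u − v) − n(n + 1)`. The remaining factors are Laurent polynomials in `q`: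
`[n]!(q − q⁻¹)ⁿ = ∏_{j=1}^{n} (q^j − q^{−j})`, and quantum binomials by the `q`-Pascal rule.
So the entry lies in `X^{2ε} ℤ[q, q⁻¹]` with `ε = t mod 2`, and `t ≡ n(a + b) + ab (mod 2)`
because `u ≡ a`, `v ≡ b` and `n(n + 1)` is even.
-/

local notation "𝓛" => Subring.closure ({q, q⁻¹} : Set K)

lemma X_ne_zero : X ≠ 0 := RatFunc.X_ne_zero

lemma q_ne_zero : q ≠ 0 := pow_ne_zero _ X_ne_zero

lemma X_pow_ne_one {m : ℕ} (hm : m ≠ 0) : X ^ m ≠ 1 := by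
  intro h
  have hpoly : (Polynomial.X ^ m : Polynomial ℂ) = 1 :=
    RatFunc.algebraMap_injective ℂ (by simpa [X] using h)
  simpa [hm] using congrArg Polynomial.natDegree hpoly

lemma q_zpow_ne_one {z : ℤ} (hz : z ≠ 0) : q ^ z ≠ 1 := by
  obtain ⟨m, rfl | rfl⟩ := Int.eq_nat_or_neg z <;>
  · have hm : 4 * m ≠ 0 := by omega
    simpa [q, ← pow_mul] using X_pow_ne_one hm

lemma q_zpow_sub_q_zpow_neg_ne_zero {z : ℤ} (hz : z ≠ 0) : q ^ z - q ^ (-z) ≠ 0 := by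
  rw [sub_ne_zero]
  intro h
  apply q_zpow_ne_one (show z + z ≠ 0 by omega)
  rw [zpow_add₀ q_ne_zero]
  nth_rewrite 2 [h]
  rw [← zpow_add₀ q_ne_zero, add_neg_cancel, zpow_zero]

lemma q_sub_q_inv_ne_zero : q - q⁻¹ ≠ 0 := by
  simpa using q_zpow_sub_q_zpow_neg_ne_zero (z := 1) one_ne_zero

lemma qint_ne_zero {z : ℤ} (hz : z ≠ 0) : qint z ≠ 0 :=
  div_ne_zero (q_zpow_sub_q_zpow_neg_ne_zero hz) q_sub_q_inv_ne_zero

lemma qfact_ne_zero (n : ℕ) : qfact n ≠ 0 :=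
  Finset.prod_ne_zero_iff.mpr fun _ _ => qint_ne_zero (by omega)

lemma qfactz_ne_zero {m : ℤ} (hm : 0 ≤ m) : qfactz m ≠ 0 := by
  rw [qfactz, if_pos hm]
  exact qfact_ne_zero _

lemma qfactz_zero : qfactz 0 = 1 := by
  simp [qfactz, qfact]

lemma qfactz_add_one {m : ℤ} (hm : 0 ≤ m) : qfactz (m + 1) = qfactz m * qint (m + 1) := by
  lift m to ℕ using hm
  rw [qfactz, qfactz, if_pos (by omega), if_pos (by omega)]
  simp [qfact, Finset.prod_range_succ]

lemma qint_eq_add (m k : ℤ) : qint m = q ^ k * qint (m - k) + q ^ (k - m) * qint k := by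
  simp only [qint, ← mul_div_assoc, ← add_div, mul_sub, ← zpow_add₀ q_ne_zero]
  ring_nf

lemma qbin_eq_zero {m k : ℤ} (hk : ¬(0 ≤ k ∧ k ≤ m)) : qbin m k = 0 := if_neg hk

lemma qbin_zero {m : ℤ} (hm : 0 ≤ m) : qbin m 0 = 1 := by
  rw [qbin, if_pos ⟨le_rfl, hm⟩, qfactz_zero, sub_zero, one_mul, div_self (qfactz_ne_zero hm)]

lemma qbin_self {m : ℤ} (hm : 0 ≤ m) : qbin m m = 1 := by
  rw [qbin, if_pos ⟨hm, le_rfl⟩, sub_self, qfactz_zero, mul_one, div_self (qfactz_ne_zero hm)]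

lemma qbin_add_one {m k : ℤ} (hk : 0 < k) (hkm : k ≤ m) :
    qbin (m + 1) k = q ^ k * qbin m k + q ^ (k - (m + 1)) * qbin m (k - 1) := by
  have hfk : qfactz k = qfactz (k - 1) * qint k := by
    simpa using qfactz_add_one (by omega : 0 ≤ k - 1)
  rw [qbin, qbin, qbin, if_pos ⟨by omega, by omega⟩, if_pos ⟨by omega, hkm⟩,
    if_pos ⟨by omega, by omega⟩, show m + 1 - k = m - k + 1 by ring,
    show m - (k - 1) = m - k + 1 by ring, qfactz_add_one (by omega : 0 ≤ m),
    qfactz_add_one (by omega : 0 ≤ m - k), hfk, qint_eq_add (m + 1) k,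
    show m + 1 - k = m - k + 1 by ring]
  have := qfactz_ne_zero (by omega : 0 ≤ m)
  have := qfactz_ne_zero (by omega : 0 ≤ k - 1)
  have := qfactz_ne_zero (by omega : 0 ≤ m - k)
  have := qint_ne_zero (by omega : k ≠ 0)
  have := qint_ne_zero (by omega : m - k + 1 ≠ 0)
  field_simp

lemma zpow_q_mem (z : ℤ) : q ^ z ∈ 𝓛 := by
  obtain ⟨m, rfl | rfl⟩ := Int.eq_nat_or_neg z
  · rw [zpow_natCast]
    exact pow_mem (Subring.subset_closure (by simp)) m
  · rw [zpow_neg, zpow_natCast, ← inv_pow]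
    exact pow_mem (Subring.subset_closure (by simp)) m

lemma qbin_mem (m k : ℤ) : qbin m k ∈ 𝓛 := by
  by_cases hk : 0 ≤ k ∧ k ≤ m
  swap
  · rw [qbin_eq_zero hk]
    exact zero_mem _
  obtain ⟨hk0, hkm⟩ := hk
  lift m to ℕ using hk0.trans hkm
  induction m generalizing k with
  | zero =>
    rw [show k = 0 by omega, Nat.cast_zero, qbin_zero le_rfl]
    exact one_mem _
  | succ m ih =>
    rcases hk0.eq_or_lt with rfl | hk0
    · rw [qbin_zero (by omega)]
      exact one_mem _
    rcases hkm.eq_or_lt with rfl | hkm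
    · rw [qbin_self (by omega)]
      exact one_mem _
    push_cast at hkm ⊢
    rw [qbin_add_one hk0 (by omega)]
    exact add_mem (mul_mem (zpow_q_mem _) (ih k hk0.le (by omega)))
      (mul_mem (zpow_q_mem _) (ih (k - 1) (by omega) (by omega)))

lemma qfact_mul_q_sub_q_inv_pow (n : ℕ) :
    qfact n * (q - q⁻¹) ^ n =
      ∏ j ∈ Finset.range n, (q ^ ((j : ℤ) + 1) - q ^ (-((j : ℤ) + 1))) := by
  rw [qfact, ← Finset.card_range n, ← Finset.prod_const, Finset.card_range,
    ← Finset.prod_mul_distrib]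
  exact Finset.prod_congr rfl fun j _ => div_mul_cancel₀ _ q_sub_q_inv_ne_zero

lemma qfact_mul_q_sub_q_inv_pow_mem (n : ℕ) : qfact n * (q - q⁻¹) ^ n ∈ 𝓛 := by
  rw [qfact_mul_q_sub_q_inv_pow]
  exact prod_mem fun j _ => sub_mem (zpow_q_mem _) (zpow_q_mem _)

lemma qpow_intCast_div_two (t : ℤ) : qpow ((t : ℚ) / 2) = X ^ (2 * t) := by
  rw [qpow, show (4 : ℚ) * (t / 2) = ((2 * t : ℤ) : ℚ) by push_cast; ring, Rat.num_intCast]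

lemma X_zpow_two_mul (t : ℤ) : X ^ (2 * t) = X ^ (2 * (t % 2).toNat) * q ^ (t / 2) := by
  rw [q, ← zpow_natCast, ← zpow_natCast, ← zpow_mul, ← zpow_add₀ X_ne_zero]
  congr 1
  omega

lemma halfparity_modEq (a : ℤ) : halfparity a ≡ a [ZMOD 2] := by
  unfold halfparity Int.ModEq
  split_ifs with h
  · rw [Int.odd_iff] at h
    omega
  · rw [Int.not_odd_iff] at h
    omega

lemma entry_exponent_modEq {a b u v : ℤ} (hu : 2 ∣ a - u) (hv : 2 ∣ b - v) (n : ℤ) :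
    u * v - n * (u - v) - n * (n + 1) ≡
      n * (halfparity a + halfparity b) + halfparity a * halfparity b [ZMOD 2] := by
  set x := halfparity a
  set y := halfparity b
  have hux : u ≡ x [ZMOD 2] := (Int.modEq_of_dvd hu).trans (halfparity_modEq a).symm
  have hvy : v ≡ y [ZMOD 2] := (Int.modEq_of_dvd hv).trans (halfparity_modEq b).symm
  calc u * v - n * (u - v) - n * (n + 1) ≡ x * y - n * (x - y) - n * (n + 1) [ZMOD 2] := by
        gcongr
    _ ≡ n * (x + y) + x * y [ZMOD 2] := by
        refine Int.modEq_of_dvd ?_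
        rw [show n * (x + y) + x * y - (x * y - n * (x - y) - n * (n + 1))
          = 2 * (n * x) + n * (n + 1) by ring]
        exact dvd_add (dvd_mul_right 2 _) (Int.even_mul_succ_self n).two_dvd

theorem Rmatrix_entry_parity_general (a b u v : ℤ) (h1 : 2 ∣ (a - u)) (h2 : 2 ∣ (b - v)) (n : ℕ) :
    ∃ ε : ℕ, ε ≤ 1 ∧
      (ε : ℤ) ≡ (n : ℤ) * (halfparity a + halfparity b) + halfparity a * halfparity b
        [ZMOD 2] ∧
      ∃ P ∈ Subring.closure ({q, q⁻¹} : Set K),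
        qfact n * (q - q⁻¹) ^ n * qbin ((a - u) / 2) n * qbin ((a + u) / 2 + n) n *
            qpow (2 * hf u * hf v - (n : ℚ) * (hf u - hf v)
              - (n : ℚ) * ((n : ℚ) + 1) / 2)
          = X ^ (2 * ε) * P := by
  set t : ℤ := u * v - n * (u - v) - n * (n + 1)
  have hexp : 2 * hf u * hf v - (n : ℚ) * (hf u - hf v) - (n : ℚ) * ((n : ℚ) + 1) / 2
      = (t : ℚ) / 2 := by
    simp only [t, hf]
    push_cast
    ring
  refine ⟨(t % 2).toNat, by omega, ?_, ?_⟩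
  · refine Int.ModEq.trans ?_ (entry_exponent_modEq h1 h2 n)
    rw [Int.toNat_of_nonneg (by omega)]
    exact Int.mod_modEq t 2
  · have hP := mul_mem (mul_mem (mul_mem (qfact_mul_q_sub_q_inv_pow_mem n)
      (qbin_mem ((a - u) / 2) n)) (qbin_mem ((a + u) / 2 + n) n)) (zpow_q_mem (t / 2))
    refine ⟨_, hP, ?_⟩
    rw [hexp, qpow_intCast_div_two, X_zpow_two_mul]
    ring

/-- Parity of `R`-matrix entries: the entry
`[n]!(q−q^{−1})^n [a−u choose n][a+u+n choose n] q^{2uv−n(u−v)−n(n+1)/2}`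
lies in `q^{ε/2} · ℤ[q, q^{−1}]` for some `ε ∈ {0,1}` with
`ε ≡ n(i(a)+i(b)) + i(a)i(b) (mod 2)`.
(Half-integers are encoded by their doubles; `X = q^{1/4}`, so `q^{ε/2} = X^{2ε}`.) -/
theorem Rmatrix_entry_parity (a b u v : ℤ) (ha : 0 ≤ a) (hb : 0 ≤ b)
    (hu : |u| ≤ a) (hv : |v| ≤ b) (h1 : 2 ∣ (a - u)) (h2 : 2 ∣ (b - v))
    (n : ℕ) (hn1 : |u + 2 * (n : ℤ)| ≤ a) (hn2 : |v - 2 * (n : ℤ)| ≤ b) :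
    ∃ ε : ℕ, ε ≤ 1 ∧
      (ε : ℤ) ≡ (n : ℤ) * (halfparity a + halfparity b) + halfparity a * halfparity b
        [ZMOD 2] ∧
      ∃ P ∈ Subring.closure ({q, q⁻¹} : Set K),
        qfact n * (q - q⁻¹) ^ n * qbin ((a - u) / 2) n * qbin ((a + u) / 2 + n) n *
            qpow (2 * hf u * hf v - (n : ℚ) * (hf u - hf v)
              - (n : ℚ) * ((n : ℚ) + 1) / 2)
          = X ^ (2 * ε) * P :=
  Rmatrix_entry_parity_general a b u v h1 h2 n

end QSpin
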